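/- arXiv:1905.10149 — 6 statements merged into one kernel-verified Lean document; each statement's English description precedes it below -/
import Mathlib

section
/- Let V be a type and let (p_i, ℓ_i)_{i ∈ I} (I a finite index type) be a family of paths over V that is pairwise disentangled. Fix an index i and any ℓ' ≥ ℓ_i, and define the stay-extension p_i' : ℕ → V by p_i'(t) = p_i(t) for t ≤ ℓ_i and p_i'(t) = p_i(ℓ_i) for t > ℓ_i. Then the family obtained by replacing (p_i, ℓ_i) with (p_i', ℓ') is still pairwise disentangled. (Proposition 3.6 of the paper: if the collection of paths is disentangled, each agent can always extend its path to any later timestep, by staying at its last assigned node, while keeping the collection disentangled.) -/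
/-- Two paths `(p, lp)` and `(q, lq)` over `V` are disentangled:
whichever path is shorter, (i) no vertex conflict up to the shorter length,
(ii) no swap-type conflict up to the shorter length, and (iii) the last node of
the shorter path is avoided by the longer path afterwards. -/
def Disentangled {V : Type*} (p : ℕ → V) (lp : ℕ) (q : ℕ → V) (lq : ℕ) : Prop :=
  (lp ≤ lq →
    (∀ t ≤ lp, p t ≠ q t) ∧
    (∀ t, 0 < t → t ≤ lp → p t ≠ q (t - 1) ∧ p (t - 1) ≠ q t) ∧
    (∀ t, lp < t → t ≤ lq → p lp ≠ q t)) ∧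
  (lq ≤ lp →
    (∀ t ≤ lq, q t ≠ p t) ∧
    (∀ t, 0 < t → t ≤ lq → q t ≠ p (t - 1) ∧ q (t - 1) ≠ p t) ∧
    (∀ t, lq < t → t ≤ lp → q lq ≠ p t))

/-!
Disentanglement of `(p, lp)` and `(q, lq)` says precisely that the two paths, each extended to
all times by waiting at its last node, never collide: at no time do they occupy the same vertex,
and at no step does either of them move onto the vertex the other has just left. Stay-extending `p` to a later length `l' ≥ lp` leaves this infinite extension of `p`
unchanged, so it preserves disentanglement with every other path.
-/

def stayExtension {V : Type*} (p : ℕ → V) (l : ℕ) : ℕ → V := fun t => p (min t l)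

def CollisionFree {V : Type*} (f g : ℕ → V) : Prop :=
  ∀ t, f t ≠ g t ∧ f (t + 1) ≠ g t ∧ f t ≠ g (t + 1)

section

variable {V : Type*}

lemma CollisionFree.symm {f g : ℕ → V} (h : CollisionFree f g) : CollisionFree g f :=
  fun t => ⟨(h t).1.symm, (h t).2.2.symm, (h t).2.1.symm⟩

lemma stayExtension_of_le {p : ℕ → V} {l t : ℕ} (h : t ≤ l) : stayExtension p l t = p t := by
  simp [stayExtension, h]

lemma stayExtension_of_ge {p : ℕ → V} {l t : ℕ} (h : l ≤ t) : stayExtension p l t = p l := by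
  simp [stayExtension, h]

lemma stayExtension_stayExtension_of_le (p : ℕ → V) {l l' : ℕ} (h : l ≤ l') :
    stayExtension (stayExtension p l) l' = stayExtension p l := by
  funext t
  simp only [stayExtension]
  congr 1
  omega

lemma disentangled_comm {p q : ℕ → V} {lp lq : ℕ} :
    Disentangled p lp q lq ↔ Disentangled q lq p lp :=
  And.comm

lemma collisionFree_stayExtension_iff_of_le {p q : ℕ → V} {lp lq : ℕ} (hl : lp ≤ lq) :
    CollisionFree (stayExtension p lp) (stayExtension q lq) ↔
      (∀ t ≤ lp, p t ≠ q t) ∧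
      (∀ t, 0 < t → t ≤ lp → p t ≠ q (t - 1) ∧ p (t - 1) ≠ q t) ∧
      (∀ t, lp < t → t ≤ lq → p lp ≠ q t) := by
  constructor
  · intro h
    refine ⟨fun t ht => ?_, fun t ht0 ht => ?_, fun t ht hlt => ?_⟩
    · simpa [stayExtension_of_le ht, stayExtension_of_le (ht.trans hl)] using (h t).1
    · obtain ⟨s, rfl⟩ := Nat.exists_eq_add_one_of_ne_zero ht0.ne'
      have hs : s ≤ lp := by omega
      simpa [stayExtension_of_le ht, stayExtension_of_le hs, stayExtension_of_le (ht.trans hl),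
        stayExtension_of_le (hs.trans hl)] using (h s).2
    · simpa [stayExtension_of_ge ht.le, stayExtension_of_le hlt] using (h t).1
  · rintro ⟨hvertex, hswap, hlast⟩
    have hlast' : ∀ s, lp ≤ s → s ≤ lq → p lp ≠ q s := fun s hs hsq =>
      hs.eq_or_lt.elim (fun h => h ▸ hvertex lp le_rfl) (hlast s · hsq)
    have hvertex' : ∀ t, stayExtension p lp t ≠ stayExtension q lq t := by
      intro t
      rcases le_total t lp with ht | ht
      · rw [stayExtension_of_le ht, stayExtension_of_le (ht.trans hl)]
        exact hvertex t ht
      · rw [stayExtension_of_ge ht]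
        exact hlast' _ (le_min ht hl) (min_le_right t lq)
    refine fun t => ⟨hvertex' t, ?_⟩
    rcases le_or_gt lp t with ht | ht
    · have hstay : stayExtension p lp (t + 1) = stayExtension p lp t := by
        rw [stayExtension_of_ge ht, stayExtension_of_ge (by omega)]
      exact ⟨hstay ▸ hvertex' t, hstay ▸ hvertex' (t + 1)⟩
    · have ht' : t + 1 ≤ lp := ht
      simpa [stayExtension_of_le ht', stayExtension_of_le ht.le,
        stayExtension_of_le (ht.le.trans hl), stayExtension_of_le (ht'.trans hl)] using hswap (t + 1) t.succ_pos ht'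

lemma disentangled_iff_collisionFree {p q : ℕ → V} {lp lq : ℕ} :
    Disentangled p lp q lq ↔ CollisionFree (stayExtension p lp) (stayExtension q lq) := by
  constructor
  · intro h
    rcases le_total lp lq with hl | hl
    · exact (collisionFree_stayExtension_iff_of_le hl).2 (h.1 hl)
    · exact ((collisionFree_stayExtension_iff_of_le hl).2 (h.2 hl)).symm
  · intro h
    exact ⟨fun hl => (collisionFree_stayExtension_iff_of_le hl).1 h,
      fun hl => (collisionFree_stayExtension_iff_of_le hl).1 h.symm⟩

lemma Disentangled.stayExtension_left {p q : ℕ → V} {lp lq l' : ℕ} (h : Disentangled p lp q lq)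
    (hl : lp ≤ l') : Disentangled (stayExtension p lp) l' q lq := by
  rwa [disentangled_iff_collisionFree, stayExtension_stayExtension_of_le p hl,
    ← disentangled_iff_collisionFree]

end

theorem stay_extension_keeps_disentangled_general
    {V I : Type*} [DecidableEq I]
    (p : I → ℕ → V) (l : I → ℕ)
    (hdis : ∀ i j, i ≠ j → Disentangled (p i) (l i) (p j) (l j))
    (i : I) (l' : ℕ) (hl' : l i ≤ l')
    (p' : ℕ → V)
    (hp' : ∀ t, p' t = if t ≤ l i then p i t else p i (l i)) :
    ∀ a b, a ≠ b →
      Disentangled (Function.update p i p' a) (Function.update l i l' a)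
        (Function.update p i p' b) (Function.update l i l' b) := by
  have hp'_eq : p' = stayExtension (p i) (l i) := by
    funext t
    rw [hp' t]
    split_ifs with ht
    · exact (stayExtension_of_le ht).symm
    · exact (stayExtension_of_ge (by omega)).symm
  intro a b hab
  rcases eq_or_ne a i with rfl | ha
  · rw [Function.update_self, Function.update_self, Function.update_of_ne hab.symm,
      Function.update_of_ne hab.symm, hp'_eq]
    exact (hdis a b hab).stayExtension_left hl'
  rcases eq_or_ne b i with rfl | hb
  · rw [Function.update_self, Function.update_self, Function.update_of_ne hab,
      Function.update_of_ne hab, hp'_eq, disentangled_comm]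
    exact (hdis b a hab.symm).stayExtension_left hl'
  rw [Function.update_of_ne ha, Function.update_of_ne ha, Function.update_of_ne hb,
    Function.update_of_ne hb]
  exact hdis a b hab

/-- Proposition 3.6: in a disentangled family of paths, replacing the path of one
agent `i` by its stay-extension up to any later timestep `l'` keeps the family
disentangled. -/
theorem stay_extension_keeps_disentangled
    {V I : Type*} [Fintype I] [DecidableEq I]
    (p : I → ℕ → V) (l : I → ℕ)
    (hdis : ∀ i j, i ≠ j → Disentangled (p i) (l i) (p j) (l j))
    (i : I) (l' : ℕ) (hl' : l i ≤ l')
    (p' : ℕ → V)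
    (hp' : ∀ t, p' t = if t ≤ l i then p i t else p i (l i)) :
    ∀ a b, a ≠ b →
      Disentangled (Function.update p i p' a) (Function.update l i l' a)
        (Function.update p i p' b) (Function.update l i l' b) :=
  stay_extension_keeps_disentangled_general p l hdis i l' hl' p' hp'
end

section
/- Let (p, ℓ) and (q, ℓ) be disentangled paths over a type V of equal length ℓ, and let u, w ∈ V satisfy u ≠ w, u ≠ q(ℓ), and w ≠ p(ℓ). Then the paths p' and q' of length ℓ + 1 obtained by setting p'(ℓ+1) = u and q'(ℓ+1) = w (and agreeing with p, q respectively up to time ℓ) are disentangled from each other. (Intermediate claim in the proof of Lemma 4.2, corresponding to the case of equal path lengths, i.e., a single PIBT step: two agents may simultaneously append distinct next nodes, neither equal to the other's current node, while preserving the disentangled condition.) -/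
-- For equal lengths condition (iii) is vacuous and the two halves are mirror images.
theorem disentangled_self_iff {V : Type*} {p q : ℕ → V} {l : ℕ} :
    Disentangled p l q l ↔
      (∀ t ≤ l, p t ≠ q t) ∧
      (∀ t, 0 < t → t ≤ l → p t ≠ q (t - 1) ∧ p (t - 1) ≠ q t) := by
  refine ⟨fun h => ⟨(h.1 le_rfl).1, (h.1 le_rfl).2.1⟩, fun ⟨hvert, hswap⟩ => ?_⟩
  have hlast : ∀ t, l < t → t ≤ l → False := fun t h₁ h₂ => (h₁.trans_le h₂).false
  refine ⟨fun _ => ⟨hvert, hswap, fun t h₁ h₂ => (hlast t h₁ h₂).elim⟩,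
    fun _ => ⟨fun t ht => (hvert t ht).symm, fun t h₀ ht => ?_,
      fun t h₁ h₂ => (hlast t h₁ h₂).elim⟩⟩
  obtain ⟨h₁, h₂⟩ := hswap t h₀ ht
  exact ⟨h₂.symm, h₁.symm⟩

/-- Two disentangled paths of equal length may simultaneously append distinct
next nodes, neither equal to the other's current last node, while preserving
the disentangled condition (a single PIBT step). -/
theorem append_equal_lengths_keeps_disentangled
    {V : Type*} (p q : ℕ → V) (l : ℕ)
    (hdis : Disentangled p l q l)
    (u w : V) (huw : u ≠ w) (hu : u ≠ q l) (hw : w ≠ p l)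
    (p' q' : ℕ → V)
    (hp'agree : ∀ t ≤ l, p' t = p t) (hp'last : p' (l + 1) = u)
    (hq'agree : ∀ t ≤ l, q' t = q t) (hq'last : q' (l + 1) = w) :
    Disentangled p' (l + 1) q' (l + 1) := by
  obtain ⟨hvert, hswap⟩ := disentangled_self_iff.mp hdis
  refine disentangled_self_iff.mpr ⟨fun t ht => ?_, fun t h₀ ht => ?_⟩
  · rcases Nat.le_add_one_iff.mp ht with ht | rfl
    · rw [hp'agree t ht, hq'agree t ht]
      exact hvert t ht
    · rwa [hp'last, hq'last]
  · rcases Nat.le_add_one_iff.mp ht with ht | rfl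
    · rw [hp'agree t ht, hq'agree t ht, hp'agree _ (by omega), hq'agree _ (by omega)]
      exact hswap t h₀ ht
    · rw [Nat.add_sub_cancel, hp'last, hq'last, hp'agree l le_rfl, hq'agree l le_rfl]
      exact ⟨hu, hw.symm⟩
end

section
/- Let (p_i, ℓ_i)_{i ∈ I} be a finite family of paths over a type V that is pairwise disentangled, and let L = max_{i ∈ I} ℓ_i. Define for each i the stay-extended path p_i'(t) = p_i(min(t, ℓ_i)), of length L. Then the family (p_i', L)_{i ∈ I} is pairwise disentangled; consequently, for every t ≤ L the map i ↦ p_i'(t) is injective and for 0 < t ≤ L and distinct i, j one has p_i'(t) ≠ p_j'(t−1). (Claim of the paper: if the collection of paths is disentangled, there exists a combination of extensions of the paths such that the agents never collide — namely, each agent stays at its last assigned node.) -/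
namespace Disentangled

variable {V : Type*} {p q : ℕ → V} {lp lq : ℕ}

theorem symm (h : Disentangled p lp q lq) : Disentangled q lq p lp :=
  And.symm h

theorem last_ne (h : Disentangled p lp q lq) (hle : lp ≤ lq) {b : ℕ} (hb : lp ≤ b)
    (hbq : b ≤ lq) : p lp ≠ q b := by
  obtain ⟨hvertex, -, hlast⟩ := h.1 hle
  rcases hb.lt_or_eq with hb | rfl
  · exact hlast b hb hbq
  · exact hvertex lp le_rfl

theorem ne_of_adjacent (h : Disentangled p lp q lq) (hle : lp ≤ lq) {a b : ℕ} (ha : a ≤ lp)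
    (hb : b ≤ lq) (hab : a ≤ b + 1) (hba : b ≤ a + 1) : p a ≠ q b := by
  obtain ⟨hvertex, hswap, -⟩ := h.1 hle
  rcases Nat.lt_trichotomy a b with hlt | rfl | hgt
  · obtain rfl : b = a + 1 := by omega
    rcases ha.lt_or_eq with ha | rfl
    · simpa using (hswap (a + 1) (by omega) (by omega)).2
    · exact h.last_ne hle (by omega) hb
  · exact hvertex a ha
  · obtain rfl : a = b + 1 := by omega
    simpa using (hswap (b + 1) (by omega) ha).1

theorem stay_ne_of_le (h : Disentangled p lp q lq) (hle : lp ≤ lq) {s t : ℕ} (hst : s ≤ t + 1)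
    (hts : t ≤ s + 1) : p (min s lp) ≠ q (min t lq) := by
  rcases le_or_gt s lp with hs | hs
  · rcases le_or_gt t lq with ht | ht
    · rw [min_eq_left hs, min_eq_left ht]
      exact h.ne_of_adjacent hle hs ht hst hts
    · rw [min_eq_left hs, min_eq_right ht.le]
      obtain ⟨rfl, rfl⟩ : s = lp ∧ lq = lp := by omega
      exact h.last_ne hle le_rfl le_rfl
  · rw [min_eq_right hs.le]
    exact h.last_ne hle (le_min (by omega) hle) (min_le_right t lq)

theorem stay_ne (h : Disentangled p lp q lq) {s t : ℕ} (hst : s ≤ t + 1) (hts : t ≤ s + 1) :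
    p (min s lp) ≠ q (min t lq) := by
  rcases le_total lp lq with hle | hle
  · exact h.stay_ne_of_le hle hst hts
  · exact (h.symm.stay_ne_of_le hle hts hst).symm

end Disentangled

theorem disentangled_of_adjacent_ne {V : Type*} {p q : ℕ → V}
    (h : ∀ s t, s ≤ t + 1 → t ≤ s + 1 → p s ≠ q t) (L : ℕ) : Disentangled p L q L := by
  have half : ∀ {p q : ℕ → V}, (∀ s t, s ≤ t + 1 → t ≤ s + 1 → p s ≠ q t) →
      (∀ t ≤ L, p t ≠ q t) ∧
      (∀ t, 0 < t → t ≤ L → p t ≠ q (t - 1) ∧ p (t - 1) ≠ q t) ∧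
      (∀ t, L < t → t ≤ L → p L ≠ q t) := fun h =>
    ⟨fun t _ => h t t (by omega) (by omega),
      fun t _ _ => ⟨h t (t - 1) (by omega) (by omega), h (t - 1) t (by omega) (by omega)⟩,
      fun t hlt hle => absurd hlt (by omega)⟩
  exact ⟨fun _ => half h, fun _ => half fun s t hst hts => (h t s hts hst).symm⟩

theorem stay_extended_family_disentangled_general
    {V I : Type*}
    (p : I → ℕ → V) (l : I → ℕ)
    (hdis : ∀ i j, i ≠ j → Disentangled (p i) (l i) (p j) (l j))
    (L : ℕ) :
    (∀ i j, i ≠ j →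
      Disentangled (fun t => p i (min t (l i))) L (fun t => p j (min t (l j))) L) ∧
    (∀ t ≤ L, Function.Injective (fun i => p i (min t (l i)))) ∧
    (∀ t, 0 < t → t ≤ L → ∀ i j, i ≠ j →
      p i (min t (l i)) ≠ p j (min (t - 1) (l j))) := by
  have hne : ∀ i j, i ≠ j → ∀ s t, s ≤ t + 1 → t ≤ s + 1 →
      p i (min s (l i)) ≠ p j (min t (l j)) :=
    fun i j hij _ _ => (hdis i j hij).stay_ne
  refine ⟨fun i j hij => disentangled_of_adjacent_ne (hne i j hij) L, ?_, ?_⟩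
  · intro t _ i j heq
    by_contra hij
    exact hne i j hij t t (by omega) (by omega) heq
  · intro t ht _ i j hij
    exact hne i j hij t (t - 1) (by omega) (by omega)

/-- Stay-extending every path of a disentangled family to the maximum length `L`
yields a disentangled family; consequently no vertex conflicts nor swap
conflicts occur up to timestep `L`. -/
theorem stay_extended_family_disentangled
    {V I : Type*} [Fintype I] [Nonempty I]
    (p : I → ℕ → V) (l : I → ℕ)
    (hdis : ∀ i j, i ≠ j → Disentangled (p i) (l i) (p j) (l j))
    (L : ℕ) (hL : L = Finset.univ.sup' Finset.univ_nonempty l) :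
    (∀ i j, i ≠ j →
      Disentangled (fun t => p i (min t (l i))) L (fun t => p j (min t (l j))) L) ∧
    (∀ t ≤ L, Function.Injective (fun i => p i (min t (l i)))) ∧
    (∀ t, 0 < t → t ≤ L → ∀ i j, i ≠ j →
      p i (min t (l i)) ≠ p j (min (t - 1) (l j))) :=
  stay_extended_family_disentangled_general p l hdis L
end

section
/- Let G be a simple graph on a vertex type V, let A be a finite type of agents, let f : A → V be an injective configuration, and let c : G.Walk u u be a cycle (in the sense of SimpleGraph.Walk.IsCycle). Define f' : A → V by: f'(a) = c.getVert(k+1) whenever f(a) = c.getVert(k) for some 0 ≤ k < c.length, and f'(a) = f(a) otherwise (this is well-defined since the vertices c.getVert(0), …, c.getVert(c.length − 1) of a cycle are pairwise distinct). Then f' is a valid one-step transition from f: f' is injective, every agent either stays or moves along an edge of G, and no two distinct agents swap positions. (Rotation step underlying Lemma 3.3 of the paper: rotating all agents occupying vertices of a simple cycle of length ≥ 3 one position along the cycle is a collision-free move.) -/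
/-- A valid one-step transition between configurations of agents on a graph:
no vertex conflict, every agent stays or moves along an edge, and no swap
conflict. -/
def ValidStep {V A : Type*} (G : SimpleGraph V) (f f' : A → V) : Prop :=
  Function.Injective f' ∧
  (∀ a, f' a = f a ∨ G.Adj (f a) (f' a)) ∧
  (∀ a b, a ≠ b → ¬(f' a = f b ∧ f' b = f a))

namespace SimpleGraph.Walk

variable {V : Type*} {G : SimpleGraph V} {u : V}

def RotationStep (c : G.Walk u u) (x y : V) : Prop :=
  (∃ k < c.length, x = c.getVert k ∧ y = c.getVert (k + 1)) ∨
    ((∀ k < c.length, x ≠ c.getVert k) ∧ y = x)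

lemma rotationStep_of_forall {c : G.Walk u u} {x y : V}
    (h : (∀ k, k < c.length → x = c.getVert k → y = c.getVert (k + 1)) ∧
      ((∀ k, k < c.length → x ≠ c.getVert k) → y = x)) :
    c.RotationStep x y := by
  by_cases hx : ∃ k < c.length, x = c.getVert k
  · obtain ⟨k, hk, rfl⟩ := hx
    exact Or.inl ⟨k, hk, rfl, h.1 k hk rfl⟩
  · push Not at hx
    exact Or.inr ⟨hx, h.2 hx⟩

lemma RotationStep.eq_or_adj {c : G.Walk u u} {x y : V} (h : c.RotationStep x y) :
    y = x ∨ G.Adj x y := by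
  rcases h with ⟨k, hk, rfl, rfl⟩ | ⟨-, rfl⟩
  · exact Or.inr (c.adj_getVert_succ hk)
  · exact Or.inl rfl

lemma exists_getVert_eq_getVert_add_one (c : G.Walk u u) {k : ℕ} (hk : k < c.length) :
    ∃ l < c.length, c.getVert l = c.getVert (k + 1) := by
  rcases Nat.lt_or_ge (k + 1) c.length with hk' | hk'
  · exact ⟨k + 1, hk', rfl⟩
  · refine ⟨0, by omega, ?_⟩
    rw [show k + 1 = c.length by omega, getVert_zero, getVert_length]

namespace IsCycle

variable {c : G.Walk u u}

lemma getVert_add_one_inj (hc : c.IsCycle) {k l : ℕ} (hk : k < c.length) (hl : l < c.length)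
    (h : c.getVert (k + 1) = c.getVert (l + 1)) : k = l := by
  have := hc.getVert_injOn (by simp only [Set.mem_ofPred_eq]; omega)
    (by simp only [Set.mem_ofPred_eq]; omega) h
  omega

lemma getVert_add_one_eq_getVert (hc : c.IsCycle) {k l : ℕ} (hk : k < c.length)
    (hl : l < c.length) (h : c.getVert (k + 1) = c.getVert l) :
    l = k + 1 ∨ l = 0 ∧ k + 1 = c.length := by
  rcases Nat.eq_zero_or_pos l with rfl | hl₀
  · rw [getVert_zero, hc.getVert_endpoint_iff (by omega)] at h
    omega
  · have := hc.getVert_injOn (by simp only [Set.mem_ofPred_eq]; omega)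
      (by simp only [Set.mem_ofPred_eq]; omega) h
    omega

lemma rotationStep_injective (hc : c.IsCycle) {x x' y : V} (h : c.RotationStep x y)
    (h' : c.RotationStep x' y) : x = x' := by
  rcases h with ⟨k, hk, rfl, rfl⟩ | ⟨hx, rfl⟩ <;>
    rcases h' with ⟨l, hl, rfl, hy⟩ | ⟨hx', rfl⟩
  · rw [hc.getVert_add_one_inj hk hl hy]
  · obtain ⟨l, hl, hl'⟩ := c.exists_getVert_eq_getVert_add_one hk
    exact absurd hl'.symm (hx' l hl)
  · obtain ⟨k, hk, hk'⟩ := c.exists_getVert_eq_getVert_add_one hl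
    exact absurd (hy.trans hk'.symm) (hx k hk)
  · rfl

-- A swap along the cycle would force `c.length ∣ 2`, impossible since `3 ≤ c.length`.
lemma rotationStep_antisymm (hc : c.IsCycle) {x y : V} (hxy : c.RotationStep x y)
    (hyx : c.RotationStep y x) : x = y := by
  rcases hxy with ⟨k, hk, rfl, rfl⟩ | ⟨-, rfl⟩
  · rcases hyx with ⟨l, hl, hkl, hlk⟩ | ⟨-, h⟩
    · have := hc.three_le_length
      have := hc.getVert_add_one_eq_getVert hk hl hkl
      have := hc.getVert_add_one_eq_getVert hl hk hlk.symm
      omega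
    · exact h
  · rfl

end IsCycle

end SimpleGraph.Walk

theorem cycle_rotation_validStep_general
    {V A : Type*} (G : SimpleGraph V) (u : V)
    (c : G.Walk u u) (hc : c.IsCycle)
    (f f' : A → V) (hf : Function.Injective f)
    (hf' : ∀ a : A,
      (∀ k, k < c.length → f a = c.getVert k → f' a = c.getVert (k + 1)) ∧
      ((∀ k, k < c.length → f a ≠ c.getVert k) → f' a = f a)) :
    ValidStep G f f' := by
  have hrot (a : A) : c.RotationStep (f a) (f' a) :=
    SimpleGraph.Walk.rotationStep_of_forall (hf' a)
  refine ⟨fun a b hab => hf (hc.rotationStep_injective (hrot a) (hab ▸ hrot b)),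
    fun a => (hrot a).eq_or_adj, fun a b hne ⟨hab, hba⟩ => hne (hf ?_)⟩
  exact hc.rotationStep_antisymm (hab ▸ hrot a) (hba ▸ hrot b)

/-- Rotating all agents occupying vertices of a simple cycle one position along
the cycle is a collision-free (valid) one-step move. -/
theorem cycle_rotation_validStep
    {V A : Type*} [Fintype A] (G : SimpleGraph V) (u : V)
    (c : G.Walk u u) (hc : c.IsCycle)
    (f f' : A → V) (hf : Function.Injective f)
    (hf' : ∀ a : A,
      (∀ k, k < c.length → f a = c.getVert k → f' a = c.getVert (k + 1)) ∧
      ((∀ k, k < c.length → f a ≠ c.getVert k) → f' a = f a)) :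
    ValidStep G f f' :=
  cycle_rotation_validStep_general G u c hc f f' hf hf'
end

section
/- Let G be a simple graph on a finite vertex type V satisfying the cycle condition, let A be a finite type of agents, let f : A → V be an injective configuration, let a₀ ∈ A be a distinguished (highest-priority) agent, and let v* be any vertex adjacent to f(a₀). Then there exists a configuration f' that is a valid one-step transition from f with f'(a₀) = v*. (Existential content of Lemma 3.3 of the paper: if there is a simple cycle of length ≥ 3 through the edge between the highest-priority agent's node and an arbitrary neighbor v*, then that agent can move to v* in the next timestep by a collision-free joint move of all agents.) -/
/-- `G` satisfies the cycle condition if for every pair of adjacent vertices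
`u, v` there is a cycle from `u` to `u` whose second vertex is `v`. -/
def CycleCond {V : Type*} (G : SimpleGraph V) : Prop :=
  ∀ u v : V, G.Adj u v → ∃ c : G.Walk u u, c.IsCycle ∧ c.getVert 1 = v

/-!
Close the edge `f a₀ — v*` to a cycle and move every agent on the cycle one step forward
along it, starting with `f a₀ ↦ v*`; agents off the cycle stay put. The induced vertex map is
the cyclic permutation `formPerm` of the cycle's vertex list, so the new configuration is
injective and every move follows an edge. Because the cycle has length at least `3`, this
permutation has no `2`-cycles, which is exactly the absence of swap conflicts.
-/

namespace List

variable {α : Type*} [DecidableEq α] {l : List α}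

theorem rel_formPerm_apply {R : α → α → Prop} (hl : l.Nodup) (hne : l ≠ [])
    (hR : (l.getLast hne :: l).IsChain R) {x : α} (hx : x ∈ l) : R x (l.formPerm x) := by
  obtain ⟨i, hi, rfl⟩ := getElem_of_mem hx
  rw [formPerm_apply_getElem l hl i hi]
  by_cases hlast : i + 1 < l.length
  · have := hR.getElem (i + 1) (by simp only [length_cons]; omega)
    simpa only [getElem_cons_succ, Nat.mod_eq_of_lt hlast] using this
  · obtain rfl : i = l.length - 1 := by omega
    simpa [Nat.sub_add_cancel (length_pos_of_ne_nil hne), getLast_eq_getElem] using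
      hR.getElem 0 (by simpa using length_pos_of_ne_nil hne)

theorem formPerm_apply_apply_ne_self (hl : l.Nodup) (h3 : 3 ≤ l.length) {x : α} (hx : x ∈ l) :
    l.formPerm (l.formPerm x) ≠ x := by
  obtain ⟨i, hi, rfl⟩ := getElem_of_mem hx
  intro h
  have hmod : (i + 2) % l.length = i := by
    rwa [← Equiv.Perm.mul_apply, ← pow_two, formPerm_pow_apply_getElem l hl 2 i hi,
      hl.getElem_inj_iff] at h
  have h2 : 2 ≡ 0 [MOD l.length] :=
    Nat.ModEq.add_left_cancel' i (by rw [Nat.ModEq, hmod, add_zero, Nat.mod_eq_of_lt hi])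
  have := Nat.le_of_dvd two_pos (Nat.modEq_zero_iff_dvd.mp h2)
  omega

end List

theorem validStep_perm_comp {V A : Type*} {G : SimpleGraph V} {f : A → V}
    (hf : Function.Injective f) (σ : Equiv.Perm V) (hadj : ∀ x, σ x ≠ x → G.Adj x (σ x))
    (hswap : ∀ x, σ (σ x) = x → σ x = x) : ValidStep G f (σ ∘ f) := by
  refine ⟨σ.injective.comp hf, fun a => (em _).imp_right (hadj (f a)), ?_⟩
  rintro a b hab ⟨hab', hba'⟩
  rw [Function.comp_apply] at hab' hba'
  have hfixed : σ (f a) = f a := hswap _ (by rw [hab', hba'])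
  exact hab (hf (hfixed ▸ hab'))

theorem SimpleGraph.Walk.IsCycle.exists_perm_along_edges {V : Type*} {G : SimpleGraph V} {u : V}
    {c : G.Walk u u} (hc : c.IsCycle) :
    ∃ σ : Equiv.Perm V, σ u = c.getVert 1 ∧ (∀ x, σ x ≠ x → G.Adj x (σ x)) ∧
      ∀ x, σ (σ x) = x → σ x = x := by
  classical
  cases c with
  | nil => exact absurd hc SimpleGraph.Walk.not_isCycle_nil
  | @cons _ w _ h p =>
    have hnd : p.support.Nodup := by simpa using hc.support_nodup
    have hlen : 3 ≤ p.support.length := by simpa using hc.three_le_length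
    refine ⟨p.support.formPerm, ?_, fun x hx => ?_, fun x hx => ?_⟩
    · simpa [p.getLast_support] using List.formPerm_apply_getLast w p.support.tail
    · refine List.rel_formPerm_apply hnd p.support_ne_nil ?_ (List.mem_of_formPerm_apply_ne hx)
      simpa [p.getLast_support] using (cons h p).isChain_adj_support
    · by_contra hmoved
      exact List.formPerm_apply_apply_ne_self hnd hlen (List.mem_of_formPerm_apply_ne hmoved) hx

theorem highest_priority_agent_can_move_general
    {V A : Type*} (G : SimpleGraph V)
    (hG : CycleCond G)
    (f : A → V) (hf : Function.Injective f)
    (a0 : A) (vstar : V) (hadj : G.Adj (f a0) vstar) :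
    ∃ f' : A → V, ValidStep G f f' ∧ f' a0 = vstar := by
  obtain ⟨c, hc, hc1⟩ := hG (f a0) vstar hadj
  obtain ⟨σ, hσu, hσadj, hσswap⟩ := hc.exists_perm_along_edges
  exact ⟨σ ∘ f, validStep_perm_comp hf σ hσadj hσswap, by simp [hσu, hc1]⟩

/-- Lemma 3.3 (existential content): on a graph satisfying the cycle condition,
the highest-priority agent can move to an arbitrary neighbor of its current
node via a valid joint one-step move of all agents. -/
theorem highest_priority_agent_can_move
    {V A : Type*} [Fintype V] [Fintype A] (G : SimpleGraph V)
    (hG : CycleCond G)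
    (f : A → V) (hf : Function.Injective f)
    (a0 : A) (vstar : V) (hadj : G.Adj (f a0) vstar) :
    ∃ f' : A → V, ValidStep G f f' ∧ f' a0 = vstar :=
  highest_priority_agent_can_move_general G hG f hf a0 vstar hadj
end

section
/- Let G be a simple graph on a finite vertex type V satisfying the cycle condition, let A be a finite type of agents, let f₀ : A → V be an injective configuration, let a₀ ∈ A, and let W be any walk in G starting at f₀(a₀), of length k. Then there exist configurations f₀, f₁, …, f_k such that for each 0 ≤ t < k the pair (f_t, f_{t+1}) is a valid one-step transition, and f_t(a₀) = W.getVert(t) for every 0 ≤ t ≤ k. (Existential content of Lemma 4.3 of the paper: the agent with highest priority can be moved along an arbitrary path of any length while all agents execute collision-free moves.) -/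
/-!
For each edge `uv` of the walk, the cycle condition gives a cycle through `u` whose next
vertex is `v`. Rotating every vertex of that cycle one step forward is a permutation `σ`
of `V` that moves along edges and, since the cycle has length at least 3, never swaps two
vertices; it sends `u` to `v`. Such a move of all vertices is expressed as
`ValidStep G id σ`. Applying these rotations one after another to the configuration moves
every agent collision-free and carries `a0` along the walk. Once the walk has ended, the
identity move is used.
-/

open Function SimpleGraph

section

variable {V : Type*} {G : SimpleGraph V}

lemma ValidStep.comp {B C : Type*} {f g : B → V} (hfg : ValidStep G f g) {h : C → B}
    (hh : Injective h) : ValidStep G (f ∘ h) (g ∘ h) :=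
  ⟨hfg.1.comp hh, fun a => hfg.2.1 (h a), fun a b hab => hfg.2.2 (h a) (h b) (hh.ne hab)⟩

lemma validStep_self {B : Type*} {f : B → V} (hf : Injective f) : ValidStep G f f :=
  ⟨hf, fun _ => Or.inl rfl, fun _ _ hab hswap => hab (hf hswap.1)⟩

lemma validStep_id_formPerm [DecidableEq V] {l : List V} (hl : l.Nodup) (h3 : 3 ≤ l.length)
    (hadj : ∀ i (hi : i < l.length),
      G.Adj l[i] (l[(i + 1) % l.length]'(Nat.mod_lt _ (Nat.zero_lt_of_lt hi)))) :
    ValidStep G id l.formPerm := by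
  refine ⟨l.formPerm.injective, fun x => ?_, fun x y hxy ⟨hxy', hyx'⟩ => ?_⟩
  · by_cases hx : x ∈ l
    · obtain ⟨i, hi, rfl⟩ := List.getElem_of_mem hx
      exact Or.inr (by simpa [List.formPerm_apply_getElem _ hl] using hadj i hi)
    · exact Or.inl (List.formPerm_apply_of_notMem hx)
  · have hx : x ∈ l := by
      by_contra hx
      exact hxy ((List.formPerm_apply_of_notMem hx).symm.trans hxy')
    obtain ⟨i, hi, rfl⟩ := List.getElem_of_mem hx
    -- a swap would make `formPerm l` of order two on `l[i]`, impossible on a cycle of length ≥ 3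
    have hsq : (l.formPerm ^ 2) l[i] = l[i] := by
      rw [pow_two, Equiv.Perm.mul_apply]
      simpa [hxy'] using hyx'
    rw [List.formPerm_pow_apply_getElem _ hl, hl.getElem_inj_iff] at hsq
    have hdvd : l.length ∣ 2 := by
      have := Nat.sub_mod_eq_zero_of_mod_eq (hsq.trans (Nat.mod_eq_of_lt hi).symm)
      simpa using Nat.dvd_of_mod_eq_zero this
    exact absurd (Nat.le_of_dvd two_pos hdvd) (by omega)

lemma SimpleGraph.Walk.getVert_mod_length {u : V} (c : G.Walk u u) {i : ℕ}
    (hi : i ≤ c.length) : c.getVert (i % c.length) = c.getVert i := by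
  rcases hi.lt_or_eq with hi | rfl
  · rw [Nat.mod_eq_of_lt hi]
  · rw [Nat.mod_self, getVert_zero, getVert_length]

lemma SimpleGraph.Walk.IsCycle.exists_validStep_id {u : V} {c : G.Walk u u} (hc : c.IsCycle) :
    ∃ σ : V → V, ValidStep G id σ ∧ σ u = c.getVert 1 := by
  classical
  set l := c.support.dropLast with hl_def
  have hlen : l.length = c.length := by simp [hl_def]
  have hget : ∀ i (hi : i < l.length), l[i] = c.getVert i := fun i hi => by
    simp [hl_def, List.getElem_dropLast, support_getElem_eq_getVert]
  have h3 := hc.three_le_length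
  refine ⟨l.formPerm, validStep_id_formPerm hc.nodup_dropLast_support (by omega) fun i hi => ?_, ?_⟩
  · rw [hget, hget, hlen, c.getVert_mod_length (by omega)]
    exact c.adj_getVert_succ (by omega)
  · have := List.formPerm_apply_getElem l hc.nodup_dropLast_support 0 (by omega)
    rwa [hget, hget, hlen, Nat.mod_eq_of_lt (by omega), getVert_zero] at this

lemma CycleCond.exists_validStep_id (hG : CycleCond G) {u v : V} (huv : G.Adj u v) :
    ∃ σ : V → V, ValidStep G id σ ∧ σ u = v := by
  obtain ⟨c, hc, hcv⟩ := hG u v huv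
  exact hcv ▸ hc.exists_validStep_id

lemma exists_trajectory_of_validStep_id {A : Type*} (σ : ℕ → V → V)
    (hσ : ∀ t, ValidStep G id (σ t)) (p : ℕ → V) (hp : ∀ t, σ t (p t) = p (t + 1))
    {f₀ : A → V} (hf₀ : Injective f₀) {a₀ : A} (h₀ : f₀ a₀ = p 0) :
    ∃ F : ℕ → A → V, F 0 = f₀ ∧ (∀ t, ValidStep G (F t) (F (t + 1))) ∧
      ∀ t, F t a₀ = p t := by
  let F : ℕ → A → V := fun t => Nat.rec f₀ (fun s fs => σ s ∘ fs) t
  have hF_inj : ∀ t, Injective (F t) := fun t => by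
    induction t with
    | zero => exact hf₀
    | succ t ih => exact (hσ t).1.comp ih
  refine ⟨F, rfl, fun t => (hσ t).comp (hF_inj t), fun t => ?_⟩
  induction t with
  | zero => exact h₀
  | succ t ih => exact (congrArg (σ t) ih).trans (hp t)

end

theorem highest_priority_agent_moves_along_walk_general
    {V A : Type*} (G : SimpleGraph V)
    (hG : CycleCond G)
    (f0 : A → V) (hf0 : Function.Injective f0)
    (a0 : A) (w : V) (W : G.Walk (f0 a0) w) :
    ∃ F : ℕ → (A → V), F 0 = f0 ∧
      (∀ t, t < W.length → ValidStep G (F t) (F (t + 1))) ∧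
      (∀ t, t ≤ W.length → F t a0 = W.getVert t) := by
  have hmove : ∀ t, ∃ σ : V → V, ValidStep G id σ ∧ σ (W.getVert t) = W.getVert (t + 1) := by
    intro t
    rcases lt_or_ge t W.length with ht | ht
    · exact hG.exists_validStep_id (W.adj_getVert_succ ht)
    · refine ⟨id, validStep_self injective_id, ?_⟩
      rw [id, W.getVert_of_length_le ht, W.getVert_of_length_le (by omega)]
  choose σ hσ hσW using hmove
  obtain ⟨F, hF₀, hF_step, hF_a₀⟩ :=
    exists_trajectory_of_validStep_id σ hσ W.getVert hσW hf0 W.getVert_zero.symm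
  exact ⟨F, hF₀, fun t _ => hF_step t, fun t _ => hF_a₀ t⟩

/-- Lemma 4.3 (existential content): the highest-priority agent can be moved
along an arbitrary walk of any length while all agents execute collision-free
moves. -/
theorem highest_priority_agent_moves_along_walk
    {V A : Type*} [Fintype V] [Fintype A] (G : SimpleGraph V)
    (hG : CycleCond G)
    (f0 : A → V) (hf0 : Function.Injective f0)
    (a0 : A) (w : V) (W : G.Walk (f0 a0) w) :
    ∃ F : ℕ → (A → V), F 0 = f0 ∧
      (∀ t, t < W.length → ValidStep G (F t) (F (t + 1))) ∧
      (∀ t, t ≤ W.length → F t a0 = W.getVert t) :=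
  highest_priority_agent_moves_along_walk_general G hG f0 hf0 a0 w W
end
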